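/- Let A be a von Neumann hyperring. The following are equivalent: (a) e + eᶜ = {1} for every idempotent e ∈ A; (b) for all a,b,c ∈ A, a ∈ b+c holds in A if and only if for every prime ideal p of A there exists v ∉ p with av ∈ bv+cv. -/

import Mathlib

universe u v

/-- A multiring: a commutative monoid with a multivalued addition. -/
class Multiring (A : Type u) extends CommMonoid A, Zero A, Neg A where
  /-- the multivalued sum: `madd b c` is the set `b + c` -/
  madd : A → A → Set A
  madd_nonempty : ∀ a b : A, (madd a b).Nonempty
  madd_rev_left : ∀ a b c : A, a ∈ madd b c → c ∈ madd (-b) a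
  madd_rev_right : ∀ a b c : A, a ∈ madd b c → b ∈ madd a (-c)
  mem_madd_zero : ∀ a b : A, a ∈ madd b 0 ↔ a = b
  madd_assoc : ∀ a b c g x : A, g ∈ madd a b → x ∈ madd g c →
    ∃ h ∈ madd b c, x ∈ madd a h
  madd_comm : ∀ a b : A, madd a b = madd b a
  mul_zero' : ∀ a : A, a * 0 = 0
  madd_mul : ∀ a b c d : A, a ∈ madd b c → a * d ∈ madd (b * d) (c * d)

namespace Multiring

variable {A : Type u} [Multiring A]

/-- the iterated multivalued sum `x₁ + ⋯ + xₙ = {x₁} + (x₂ + ⋯ + xₙ)` of a list -/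
def listSum : List A → Set A
  | [] => {(0 : A)}
  | a :: l => {x : A | ∃ y ∈ listSum l, x ∈ madd a y}

/-- an ideal of a multiring: a nonempty subset with `I + I ⊆ I` and `A·I ⊆ I` -/
def IsIdeal (I : Set A) : Prop :=
  I.Nonempty ∧ (∀ a ∈ I, ∀ b ∈ I, madd a b ⊆ I) ∧ ∀ a : A, ∀ b ∈ I, a * b ∈ I

/-- a prime ideal: a proper ideal such that `a*b ∈ p → a ∈ p ∨ b ∈ p` -/
def IsPrimeIdeal (I : Set A) : Prop :=
  IsIdeal I ∧ (1 : A) ∉ I ∧ ∀ a b : A, a * b ∈ I → a ∈ I ∨ b ∈ I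

/-- a maximal ideal: a proper ideal maximal among proper ideals -/
def IsMaximalIdeal (I : Set A) : Prop :=
  IsIdeal I ∧ (1 : A) ∉ I ∧ ∀ J : Set A, IsIdeal J → (1 : A) ∉ J → I ⊆ J → J = I

/-- a multiplicative subset -/
def IsMultiplicative (S : Set A) : Prop :=
  (1 : A) ∈ S ∧ ∀ s ∈ S, ∀ t ∈ S, s * t ∈ S

/-- a hyperring: a multiring with the strong distributivity property -/
def IsHyperring (A : Type u) [Multiring A] : Prop :=
  ∀ x b c d : A, x ∈ madd (b * d) (c * d) → ∃ a ∈ madd b c, x = a * d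

/-- a von Neumann (regular) hyperring -/
def IsVonNeumann (A : Type u) [Multiring A] : Prop :=
  IsHyperring A ∧ ∀ a : A, ∃ b : A, a = a * a * b

/-- the equivalence modulo an ideal `I`: `a ∼_I b` iff `(a + (-b)) ∩ I ≠ ∅`;
this is equality of classes in the quotient multiring `A/I`. -/
def simI (I : Set A) (a b : A) : Prop := ∃ x ∈ madd a (-b), x ∈ I

/-- membership of classes in the multivalued sum of the quotient `A/I`:
`[a] ∈ [b] + [c]` iff `a ∈ b + c + i` for some `i ∈ I`. -/
def qmemI (I : Set A) (a b c : A) : Prop := ∃ i ∈ I, ∃ w ∈ madd c i, a ∈ madd b w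

/-- representatives `x` with `[x] ∈ [c₁] + ⋯ + [cₙ]` in the quotient `A/I` -/
def qlistSumI (I : Set A) : List A → Set A
  | [] => {x : A | simI I x 0}
  | c :: l => {x : A | ∃ y ∈ qlistSumI I l, qmemI I x c y}

/-- the quotient multiring `A/I` is a multifield: `1 ≠ 0` and every nonzero
element is weak-invertible -/
def QuotIsMultifield (I : Set A) : Prop :=
  ¬ simI I 1 0 ∧
    ∀ a : A, ¬ simI I a 0 →
      ∃ l : List A, l ≠ [] ∧ (1 : A) ∈ qlistSumI I (l.map fun b => a * b)

/-- the quotient multiring `A/I` is a hyperfield: `1 ≠ 0` and every nonzero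
element is invertible -/
def QuotIsHyperfield (I : Set A) : Prop :=
  ¬ simI I 1 0 ∧ ∀ a : A, ¬ simI I a 0 → ∃ b : A, simI I (a * b) 1

/-- the Marshall equivalence associated to a multiplicative set `S`:
`a ∼_S b` iff `as = bt` for some `s,t ∈ S`; this is equality of classes in the
Marshall quotient `A/ₘS`. -/
def simM (S : Set A) (a b : A) : Prop := ∃ s ∈ S, ∃ t ∈ S, a * s = b * t

/-- `S̄ = {x : xs ∈ S for some s ∈ S}` -/
def mbar (S : Set A) : Set A := {x : A | ∃ s ∈ S, x * s ∈ S}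

/-- membership of classes in the multivalued sum of the Marshall quotient `A/ₘS`:
`[a] ∈ [b] + [c]` iff `as ∈ bt + cu` for some `s,t,u ∈ S`. -/
def qmemM (S : Set A) (a b c : A) : Prop :=
  ∃ s ∈ S, ∃ t ∈ S, ∃ u ∈ S, a * s ∈ madd (b * t) (c * u)

/-- representatives `x` with `[x] ∈ [c₁] + ⋯ + [cₙ]` in the Marshall quotient `A/ₘS` -/
def qlistSumM (S : Set A) : List A → Set A
  | [] => {x : A | simM S x 0}
  | c :: l => {x : A | ∃ y ∈ qlistSumM S l, qmemM S x c y}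

/-- the multivalued sum of the hyperfield `3 = {-1, 0, 1}` -/
def signAdd : SignType → SignType → Set SignType
  | SignType.zero, x => {x}
  | x, SignType.zero => {x}
  | SignType.pos, SignType.pos => {SignType.pos}
  | SignType.neg, SignType.neg => {SignType.neg}
  | _, _ => Set.univ

/-- a multiring morphism `A → 3`, i.e. an order of `A` -/
def IsSignMorphism (σ : A → SignType) : Prop :=
  (∀ a b c : A, a ∈ madd b c → σ a ∈ signAdd (σ b) (σ c)) ∧
  (∀ a b : A, σ (a * b) = σ a * σ b) ∧
  (∀ a : A, σ (-a) = -(σ a)) ∧ σ 0 = 0 ∧ σ 1 = 1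

/-- a prime cone of a multiring -/
def IsPrimeCone (P : Set A) : Prop :=
  (∀ a : A, a * a ∈ P) ∧ (∀ a ∈ P, ∀ b ∈ P, madd a b ⊆ P) ∧
  (∀ a ∈ P, ∀ b ∈ P, a * b ∈ P) ∧ (∀ a : A, a ∈ P ∨ -a ∈ P) ∧
  IsPrimeIdeal {x : A | x ∈ P ∧ -x ∈ P}

open Classical in
/-- the map `σ_P : A → 3` associated to a prime cone `P` -/
noncomputable def sigmaOf (P : Set A) (a : A) : SignType :=
  if a ∈ P ∧ -a ∈ P then 0 else if a ∈ P then 1 else -1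

/-- `ΣA²`: the set of elements lying in some finite sum of squares -/
def SumsOfSquares (A : Type u) [Multiring A] : Set A :=
  {x : A | ∃ l : List A, l ≠ [] ∧ x ∈ listSum (l.map fun a => a * a)}

/-- a multiring is semi-real when `-1 ∉ ΣA²` -/
def IsSemiReal (A : Type u) [Multiring A] : Prop := (-(1 : A)) ∉ SumsOfSquares A

/-- a real reduced multiring -/
def IsRealReduced (A : Type u) [Multiring A] : Prop :=
  IsSemiReal A ∧ (∀ a : A, a * a * a = a) ∧
  (∀ a b : A, madd a (a * b * b) = {a}) ∧
  (∀ a b : A, ∃ c : A, madd (a * a) (b * b) = {c})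

/-- a hyperfield: a hyperring with `1 ≠ 0` and all nonzero elements invertible -/
def IsHyperfield (A : Type u) [Multiring A] : Prop :=
  IsHyperring A ∧ (1 : A) ≠ 0 ∧ ∀ a : A, a ≠ 0 → ∃ b : A, a * b = 1

/-- a morphism of multirings -/
def IsMorphism {B : Type v} [Multiring B] (f : A → B) : Prop :=
  (∀ a b c : A, a ∈ madd b c → f a ∈ madd (f b) (f c)) ∧
  (∀ a b : A, f (a * b) = f a * f b) ∧
  (∀ a : A, f (-a) = -(f a)) ∧ f 0 = 0 ∧ f 1 = 1

/-- the radical `√α = {x : xⁿ ∈ α for some n ≥ 1}` of an ideal -/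
def radical (α : Set A) : Set A := {x : A | ∃ n : ℕ, 1 ≤ n ∧ x ^ n ∈ α}

/-- the ideal `(x) = ∪ {t₁x + ⋯ + tₙx}` generated by `x` -/
def genIdeal (x : A) : Set A :=
  {y : A | ∃ l : List A, l ≠ [] ∧ y ∈ listSum (l.map fun t => t * x)}

/-- `S_a = {x : aⁿ ∈ (x) for some n ≥ 0}` -/
def Sgen (a : A) : Set A := {x : A | ∃ n : ℕ, a ^ n ∈ genIdeal x}

/-- `a` is weak-invertible when `1 ∈ ab₁ + ⋯ + abₙ` for some `b₁,…,bₙ` -/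
def WeakInvertible (a : A) : Prop :=
  ∃ l : List A, l ≠ [] ∧ (1 : A) ∈ listSum (l.map fun b => a * b)

/-- the prime spectrum of a multiring -/
abbrev Spec (A : Type u) [Multiring A] : Type u := {p : Set A // IsPrimeIdeal p}

/-- the spectral topology on `spec A`, generated by the sets `D(a) = {p : a ∉ p}` -/
instance : TopologicalSpace (Spec A) :=
  TopologicalSpace.generateFrom {U : Set (Spec A) | ∃ a : A, U = {p : Spec A | a ∉ p.1}}

/-- the Marshall quotient `A/ₘS` is a real reduced multiring (expressed on
representatives) -/
def QuotIsRealReduced (S : Set A) : Prop :=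
  (∀ l : List A, l ≠ [] → (-(1 : A)) ∉ qlistSumM S (l.map fun a => a * a)) ∧
  (∀ a : A, simM S (a * a * a) a) ∧
  (∀ a b x : A, qmemM S x a (a * b * b) ↔ simM S x a) ∧
  (∀ a b : A, ∃ c : A, ∀ x : A, qmemM S x (a * a) (b * b) ↔ simM S x c)

/-- the Marshall quotient `A/ₘS` is a geometric von Neumann hyperring
(expressed on representatives): it is a hyperring, von Neumann regular, and
`e + eᶜ = {1}` for every idempotent `e` -/
def QuotGeometricVN (S : Set A) : Prop :=
  (∀ x b c d : A, qmemM S x (b * d) (c * d) → ∃ a : A, qmemM S a b c ∧ simM S x (a * d)) ∧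
  (∀ a : A, ∃ b : A, simM S a (a * a * b)) ∧
  (∀ e x : A, simM S (e * e) e → qmemM S x 1 (-e) → simM S (e * x) 0 →
    ∀ y : A, qmemM S y e x ↔ simM S y 1)

/-- a von Neumann subgroup: a multiplicative set such that for every idempotent
`a` (with complement `aᶜ`) and every `x ∈ D_S(a, aᶜ)` there is `s ∈ S` with `xs ∈ S` -/
def IsVNSubgroup (S : Set A) : Prop :=
  IsMultiplicative S ∧
    ∀ a x ac : A, a * a = a → ac ∈ madd 1 (-a) → a * ac = 0 →
      (∃ u ∈ S, ∃ v ∈ S, ∃ w ∈ S, x * u ∈ madd (a * v) (ac * w)) →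
      ∃ s ∈ S, x * s ∈ S

/-- a preorder of a multiring -/
def IsPreorderSet (T : Set A) : Prop :=
  (∀ a : A, a * a ∈ T) ∧ (∀ a ∈ T, ∀ b ∈ T, a * b ∈ T) ∧ (∀ a ∈ T, ∀ b ∈ T, madd a b ⊆ T)

/-- `1 + T = ∪ {1 + t : t ∈ T}` -/
def oneAdd (T : Set A) : Set A := {x : A | ∃ t ∈ T, x ∈ madd 1 t}

/-- `ΣḞ²`: elements lying in some finite sum of squares of nonzero elements -/
def sumSqNonzero (A : Type u) [Multiring A] : Set A :=
  {x : A | ∃ l : List A, l ≠ [] ∧ (∀ a ∈ l, a ≠ 0) ∧ x ∈ listSum (l.map fun a => a * a)}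

end Multiring

/-! If `e + eᶜ = {1}` for all idempotents, the locus `{v | a v ∈ b v + c v}` is an ideal. It
absorbs products, and for `w ∈ y + z` with `y, z` in the locus and `e` the idempotent generated
by `y`, both `e w` and `eᶜ w = eᶜ z` lie in the locus; since `u ∈ e u + eᶜ u` is the only element
of that sum, the two pieces glue back to `w`. If `a ∉ b + c` this ideal is proper, hence lies in a
maximal ideal, which in a hyperring is prime: a prime where no `v` witnesses the sum.
Conversely, at every prime one of `e`, `eᶜ` survives, and multiplying `y ∈ e + eᶜ` by it shows
that `y` agrees with `1` there. -/

namespace Multiring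

variable {A : Type u} [Multiring A]

lemma mem_madd_self_zero (a : A) : a ∈ madd a 0 := (mem_madd_zero a a).2 rfl

lemma mem_zero_madd {a b : A} : a ∈ madd 0 b ↔ a = b := by
  rw [madd_comm]; exact mem_madd_zero a b

lemma zero_mem_madd_neg (a : A) : (0 : A) ∈ madd (-a) a :=
  madd_rev_left _ _ _ (mem_madd_self_zero a)

lemma neg_neg' (a : A) : -(-a) = a :=
  ((mem_madd_zero _ _).1 (madd_rev_left _ _ _ (zero_mem_madd_neg a))).symm

lemma zero_mul' (a : A) : (0 : A) * a = 0 := by rw [mul_comm]; exact mul_zero' a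

lemma neg_mul' (a b : A) : -a * b = -(a * b) := by
  have h := madd_mul _ _ _ b (zero_mem_madd_neg a)
  rw [zero_mul'] at h
  have h' := madd_rev_right _ _ _ h
  rwa [madd_comm, mem_madd_zero] at h'

lemma neg_zero' : -(0 : A) = 0 :=
  calc -(0 : A) = -0 * 0 := by rw [neg_mul', zero_mul']
    _ = 0 := mul_zero' _

lemma mul_mem_madd_mul {a b c : A} (h : a ∈ madd b c) (d : A) :
    d * a ∈ madd (d * b) (d * c) := by
  simpa only [mul_comm d] using madd_mul a b c d h

/-- The medial law `(p₁ + p₂) + (q₁ + q₂) ⊆ (p₁ + q₁) + (p₂ + q₂)`. -/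
lemma exists_medial {z p q p₁ p₂ q₁ q₂ : A} (hz : z ∈ madd p q)
    (hp : p ∈ madd p₁ p₂) (hq : q ∈ madd q₁ q₂) :
    ∃ α ∈ madd p₁ q₁, ∃ β ∈ madd p₂ q₂, z ∈ madd α β := by
  obtain ⟨h, hh, hzh⟩ := madd_assoc p₁ p₂ q p z hp hz
  rw [madd_comm] at hh
  obtain ⟨k, hk, hhk⟩ := madd_assoc q₁ q₂ p₂ q h hq hh
  rw [madd_comm] at hzh hhk
  obtain ⟨α, hα, hzα⟩ := madd_assoc k q₁ p₁ h z hhk hzh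
  rw [madd_comm] at hα hzα hk
  exact ⟨α, hα, k, hk, hzα⟩

lemma IsIdeal.zero_mem {I : Set A} (hI : IsIdeal I) : (0 : A) ∈ I := by
  obtain ⟨⟨m, hm⟩, -, hmul⟩ := hI
  simpa only [zero_mul'] using hmul 0 m hm

lemma isIdeal_sUnion_of_isChain {c : Set (Set A)} (hc : ∀ I ∈ c, IsIdeal I)
    (hchain : IsChain (· ⊆ ·) c) {J : Set A} (hJ : J ∈ c) : IsIdeal (⋃₀ c) := by
  refine ⟨?_, ?_, ?_⟩
  · obtain ⟨m, hm⟩ := (hc J hJ).1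
    exact ⟨m, J, hJ, hm⟩
  · rintro u ⟨I₁, hI₁, hu⟩ v ⟨I₂, hI₂, hv⟩
    rcases hchain.total hI₁ hI₂ with hle | hle
    · exact fun t ht => ⟨I₂, hI₂, (hc I₂ hI₂).2.1 u (hle hu) v hv ht⟩
    · exact fun t ht => ⟨I₁, hI₁, (hc I₁ hI₁).2.1 u hu v (hle hv) ht⟩
  · rintro r v ⟨I, hI, hv⟩
    exact ⟨I, hI, (hc I hI).2.2 r v hv⟩

lemma exists_isMaximalIdeal_superset {I : Set A} (hI : IsIdeal I) (h1 : (1 : A) ∉ I) :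
    ∃ M, IsMaximalIdeal M ∧ I ⊆ M := by
  obtain ⟨M, hIM, hM⟩ := zorn_subset_nonempty {J : Set A | IsIdeal J ∧ (1 : A) ∉ J}
    (fun c hc hchain ⟨J, hJ⟩ =>
      ⟨⋃₀ c, ⟨isIdeal_sUnion_of_isChain (fun I hI => (hc hI).1) hchain hJ,
        fun ⟨I, hI, h1I⟩ => (hc hI).2 h1I⟩, fun _ => Set.subset_sUnion_of_mem⟩)
    I ⟨hI, h1⟩
  refine ⟨M, ⟨hM.prop.1, hM.prop.2, fun J hJ h1J hMJ => ?_⟩, hIM⟩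
  exact (hM.eq_of_subset ⟨hJ, h1J⟩ hMJ).symm

/-- The ideal `I + A w`. -/
def adjoin (I : Set A) (w : A) : Set A := {z | ∃ s, ∃ m ∈ I, z ∈ madd (s * w) m}

lemma subset_adjoin {I : Set A} (w : A) : I ⊆ adjoin I w :=
  fun m hm => ⟨0, m, hm, by rw [zero_mul', madd_comm]; exact mem_madd_self_zero m⟩

lemma mem_adjoin_self {I : Set A} (hI : IsIdeal I) (w : A) : w ∈ adjoin I w :=
  ⟨1, 0, hI.zero_mem, by rw [one_mul]; exact mem_madd_self_zero w⟩

lemma IsIdeal.adjoin (hH : IsHyperring A) {I : Set A} (hI : IsIdeal I) (w : A) :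
    IsIdeal (adjoin I w) := by
  refine ⟨⟨w, mem_adjoin_self hI w⟩, ?_, ?_⟩
  · rintro z ⟨s, m, hm, hz⟩ z' ⟨s', m', hm', hz'⟩ t ht
    obtain ⟨α, hα, β, hβ, ht⟩ := exists_medial ht hz hz'
    -- strong distributivity: `sw + s'w = (s + s')w`
    obtain ⟨σ, -, rfl⟩ := hH α s s' w hα
    exact ⟨σ, β, hI.2.1 m hm m' hm' hβ, ht⟩
  · rintro r z ⟨s, m, hm, hz⟩
    refine ⟨r * s, r * m, hI.2.2 r m hm, ?_⟩
    simpa only [mul_assoc] using mul_mem_madd_mul hz r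

lemma IsMaximalIdeal.one_mem_adjoin (hH : IsHyperring A) {M : Set A} (hM : IsMaximalIdeal M)
    {w : A} (hw : w ∉ M) : (1 : A) ∈ adjoin M w := by
  by_contra h1
  exact hw (hM.2.2 _ (hM.1.adjoin hH w) h1 (subset_adjoin w) ▸ mem_adjoin_self hM.1 w)

lemma IsMaximalIdeal.isPrimeIdeal (hH : IsHyperring A) {M : Set A} (hM : IsMaximalIdeal M) :
    IsPrimeIdeal M := by
  refine ⟨hM.1, hM.2.1, fun u v huv => ?_⟩
  by_contra! ⟨hu, hv⟩
  obtain ⟨s, m, hm, h1u⟩ := hM.one_mem_adjoin hH hu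
  obtain ⟨t, m', hm', h1v⟩ := hM.one_mem_adjoin hH hv
  have htv : t * v ∈ M := by
    have h := mul_mem_madd_mul h1u (t * v)
    rw [mul_one, show t * v * (s * u) = (s * t) * (u * v) by ac_rfl] at h
    exact hM.1.2.1 _ (hM.1.2.2 _ _ huv) _ (hM.1.2.2 _ _ hm) h
  exact hM.2.1 (hM.1.2.1 _ htv _ hm' h1v)

lemma exists_isPrimeIdeal_superset (hH : IsHyperring A) {I : Set A} (hI : IsIdeal I)
    (h1 : (1 : A) ∉ I) : ∃ p, IsPrimeIdeal p ∧ I ⊆ p := by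
  obtain ⟨M, hM, hIM⟩ := exists_isMaximalIdeal_superset hI h1
  exact ⟨M, hM.isPrimeIdeal hH, hIM⟩

lemma exists_complement (hH : IsHyperring A) {e : A} (he : e * e = e) :
    ∃ x, x ∈ madd 1 (-e) ∧ e * x = 0 := by
  have h0 : (0 : A) ∈ madd (1 * e) (-e * e) := by
    rw [one_mul, neg_mul', he, madd_comm]
    exact zero_mem_madd_neg e
  obtain ⟨x, hx, hxe⟩ := hH 0 1 (-e) e h0
  exact ⟨x, hx, by rw [mul_comm, hxe]⟩

lemma complement_mul_self {e x : A} (hx : x ∈ madd 1 (-e)) (hex : e * x = 0) : x * x = x := by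
  have h := madd_mul _ _ _ x hx
  rwa [one_mul, neg_mul', hex, neg_zero', mem_madd_zero] at h

lemma one_mem_madd_complement {e x : A} (hx : x ∈ madd 1 (-e)) : (1 : A) ∈ madd e x := by
  simpa only [neg_neg', madd_comm x] using madd_rev_right _ _ _ hx

/-- `e + eᶜ = {1}` for every idempotent `e`, `eᶜ` being the `x ∈ 1 + (-e)` with `e x = 0`. -/
def IsGeometric (A : Type u) [Multiring A] : Prop :=
  ∀ e x : A, e * e = e → x ∈ madd 1 (-e) → e * x = 0 → madd e x = {1}

lemma madd_mul_eq_singleton (hH : IsHyperring A) {e x : A} (hg : madd e x = {1}) (u : A) :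
    madd (e * u) (x * u) = {u} := by
  refine Set.eq_singleton_iff_unique_mem.2 ⟨?_, fun w hw => ?_⟩
  · simpa only [one_mul] using madd_mul 1 e x u (hg ▸ rfl)
  · obtain ⟨s, hs, rfl⟩ := hH w e x u hw
    rw [hg, Set.mem_singleton_iff] at hs
    rw [hs, one_mul]

def sumLocus (a b c : A) : Set A := {v | a * v ∈ madd (b * v) (c * v)}

variable {a b c : A}

lemma mem_sumLocus {v : A} : v ∈ sumLocus a b c ↔ a * v ∈ madd (b * v) (c * v) := Iff.rfl

lemma one_mem_sumLocus_iff : (1 : A) ∈ sumLocus a b c ↔ a ∈ madd b c := by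
  simp only [mem_sumLocus, mul_one]

lemma mul_mem_sumLocus {v : A} (hv : v ∈ sumLocus a b c) (r : A) : r * v ∈ sumLocus a b c := by
  simpa only [mem_sumLocus, mul_left_comm _ r] using mul_mem_madd_mul hv r

lemma mem_sumLocus_of_mul_mem (hH : IsHyperring A) {e x v : A} (hg : madd e x = {1})
    (he : e * v ∈ sumLocus a b c) (hx : x * v ∈ sumLocus a b c) : v ∈ sumLocus a b c := by
  have hv : a * v ∈ madd (e * (a * v)) (x * (a * v)) := by
    rw [madd_mul_eq_singleton hH hg]; rfl
  rw [mem_sumLocus, mul_left_comm a, mul_left_comm b, mul_left_comm c] at he hx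
  obtain ⟨α, hα, β, hβ, hαβ⟩ := exists_medial hv he hx
  rw [madd_mul_eq_singleton hH hg, Set.mem_singleton_iff] at hα hβ
  rwa [hα, hβ] at hαβ

lemma madd_subset_sumLocus (hA : IsVonNeumann A) (hgeo : IsGeometric A) {y z : A}
    (hy : y ∈ sumLocus a b c) (hz : z ∈ sumLocus a b c) : madd y z ⊆ sumLocus a b c := by
  intro w hw
  obtain ⟨y', hy'⟩ := hA.2 y
  have he : y' * y * (y' * y) = y' * y :=
    calc y' * y * (y' * y) = y' * (y * y * y') := by ac_rfl
      _ = y' * y := by rw [← hy']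
  obtain ⟨x, hx, hex⟩ := exists_complement hA.1 he
  have hyx : y * x = 0 :=
    calc y * x = y * y * y' * x := by rw [← hy']
      _ = y * (y' * y * x) := by ac_rfl
      _ = 0 := by rw [hex, mul_zero']
  refine mem_sumLocus_of_mul_mem hA.1 (hgeo _ x he hx hex) ?_ ?_
  · rw [mul_comm]
    exact mul_mem_sumLocus (mul_mem_sumLocus hy y') w
  · have hwx := mul_mem_madd_mul hw x
    rw [mul_comm x y, hyx, mem_zero_madd] at hwx
    exact hwx ▸ mul_mem_sumLocus hz x

lemma isIdeal_sumLocus (hA : IsVonNeumann A) (hgeo : IsGeometric A) :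
    IsIdeal (sumLocus a b c) := by
  refine ⟨⟨0, ?_⟩, fun y hy z hz => madd_subset_sumLocus hA hgeo hy hz,
    fun r v hv => mul_mem_sumLocus hv r⟩
  rw [mem_sumLocus, mul_zero', mul_zero', mul_zero']
  exact mem_madd_self_zero 0

lemma mem_madd_of_forall_isPrimeIdeal (hA : IsVonNeumann A) (hgeo : IsGeometric A)
    (hloc : ∀ p : Set A, IsPrimeIdeal p → ∃ v ∉ p, v ∈ sumLocus a b c) :
    a ∈ madd b c := by
  rw [← one_mem_sumLocus_iff]
  by_contra h1
  obtain ⟨p, hp, hsub⟩ := exists_isPrimeIdeal_superset hA.1 (isIdeal_sumLocus hA hgeo) h1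
  obtain ⟨v, hvp, hv⟩ := hloc p hp
  exact hvp (hsub hv)

lemma isGeometric_of_forall_isPrimeIdeal
    (hloc : ∀ a b c : A, (∀ p : Set A, IsPrimeIdeal p → ∃ v ∉ p, v ∈ sumLocus a b c) →
      a ∈ madd b c) : IsGeometric A := by
  intro e x he hx hex
  have h1 := one_mem_madd_complement hx
  refine Set.eq_singleton_iff_unique_mem.2 ⟨h1, fun y hy => (mem_madd_zero y 1).1 ?_⟩
  refine hloc y 1 0 fun p ⟨hpI, hp1, _⟩ => ?_
  by_cases hxp : x ∈ p
  · refine ⟨e, fun hep => hp1 (hpI.2.1 e hep x hxp h1), ?_⟩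
    have h := madd_mul y e x e hy
    rw [he, mul_comm x e, hex] at h
    rwa [mem_sumLocus, one_mul, zero_mul']
  · refine ⟨x, hxp, ?_⟩
    have h := madd_mul y e x x hy
    rw [hex, complement_mul_self hx hex, madd_comm] at h
    rwa [mem_sumLocus, one_mul, zero_mul']

end Multiring

/-- In a von Neumann hyperring, `e + eᶜ = {1}` for every idempotent `e` iff
sums can be checked locally: `a ∈ b + c` iff for every prime ideal `p` there is
`v ∉ p` with `av ∈ bv + cv`. -/
theorem geometric_iff_local_sums {A : Type u} [Multiring A]
    (hA : Multiring.IsVonNeumann A) :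
    (∀ e x : A, e * e = e → x ∈ Multiring.madd 1 (-e) → e * x = 0 →
      Multiring.madd e x = {1}) ↔
    (∀ a b c : A, a ∈ Multiring.madd b c ↔
      ∀ p : Set A, Multiring.IsPrimeIdeal p →
        ∃ v : A, v ∉ p ∧ a * v ∈ Multiring.madd (b * v) (c * v)) := by
  refine ⟨fun hgeo a b c => ⟨fun h p hp => ⟨1, hp.2.1, ?_⟩, ?_⟩, fun hloc => ?_⟩
  · simpa only [mul_one] using h
  · exact Multiring.mem_madd_of_forall_isPrimeIdeal hA hgeo
  · exact Multiring.isGeometric_of_forall_isPrimeIdeal fun a b c => (hloc a b c).2
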